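/- arXiv:1703.00302 — 5 statements merged into one kernel-verified Lean document; each statement's English description precedes it below -/
import Mathlib

section
/- Let n ≥ 1, let Λ and P be n×n real diagonal matrices with strictly positive diagonal entries, let μ > 0, T > 0, and let X : [0,1]×[0,T] → ℝⁿ be continuously differentiable and satisfy the transport equation ∂ₜX(z,t) + Λ ∂_zX(z,t) = 0 for all (z,t) ∈ [0,1]×[0,T]. Then the function V₁(t) := ∫₀¹ X(z,t)ᵀ P X(z,t) e^{−μz} dz is differentiable on (0,T) and satisfies, for all t ∈ (0,T): V₁′(t) ≤ −μ λ_min(Λ) V₁(t) − e^{−μ} X(1,t)ᵀ P Λ X(1,t) + X(0,t)ᵀ P Λ X(0,t), where λ_min(Λ) denotes the smallest diagonal entry of Λ. -/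
/-!
Differentiating under the integral sign gives `V₁' = ∫ (∂ₜX ⬝ P X + X ⬝ P ∂ₜX) e^{-μz}`.
Substituting `∂ₜX = -Λ ∂_zX` and using `Λᵀ P = P Λ` (both matrices are diagonal), the integrand
becomes `-∂_z (X ⬝ PΛ X) e^{-μz}`. Integrating by parts produces the boundary terms and
`-μ ∫ X ⬝ PΛ X e^{-μz}`, and pointwise `X ⬝ PΛ X ≥ λ_min(Λ) X ⬝ P X` since `P ≥ 0`.
-/

open Matrix Set Real MeasureTheory

open scoped Interval

theorem hasDerivAt_intervalIntegral_of_continuousOn {E : Type*} [NormedAddCommGroup E]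
    [NormedSpace ℝ E] {f f' : ℝ → ℝ → E} {a b c d t : ℝ} (hab : a ≤ b) (ht : t ∈ Ioo c d)
    (hf : ContinuousOn (fun p : ℝ × ℝ => f p.1 p.2) (Icc a b ×ˢ Icc c d))
    (hf' : ContinuousOn (fun p : ℝ × ℝ => f' p.1 p.2) (Icc a b ×ˢ Icc c d))
    (hderiv : ∀ z ∈ Icc a b, ∀ τ ∈ Ioo c d, HasDerivAt (f z) (f' z τ) τ) :
    HasDerivAt (fun τ => ∫ z in a..b, f z τ) (∫ z in a..b, f' z t) t := by
  have hΙ : Ι a b ⊆ Icc a b := by rw [uIoc_of_le hab]; exact Ioc_subset_Icc_self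
  have ht' : t ∈ Icc c d := Ioo_subset_Icc_self ht
  obtain ⟨C, hC⟩ := (isCompact_Icc.prod isCompact_Icc).exists_bound_of_continuousOn hf'
  refine (intervalIntegral.hasDerivAt_integral_of_dominated_loc_of_deriv_le
    (F := fun τ z => f z τ) (F' := fun τ z => f' z τ) (bound := fun _ => C)
    (Ioo_mem_nhds ht.1 ht.2) ?_ ?_ ?_ ?_ intervalIntegrable_const ?_).2
  · filter_upwards [Icc_mem_nhds ht.1 ht.2] with τ hτ
    exact ((hf.uncurry_right τ hτ).mono hΙ).aestronglyMeasurable measurableSet_uIoc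
  · exact (hf.uncurry_right t ht').intervalIntegrable_of_Icc hab
  · exact ((hf'.uncurry_right t ht').mono hΙ).aestronglyMeasurable measurableSet_uIoc
  · exact ae_of_all _ fun z hz τ hτ => hC (z, τ) ⟨hΙ hz, Ioo_subset_Icc_self hτ⟩
  · exact ae_of_all _ fun z hz τ hτ => hderiv z (hΙ hz) τ hτ

section Quadratic

variable {ι : Type*} [Fintype ι] {s : Set ℝ} {t : ℝ}

theorem HasDerivWithinAt.dotProduct {x y : ℝ → ι → ℝ} {x' y' : ι → ℝ}
    (hx : HasDerivWithinAt x x' s t) (hy : HasDerivWithinAt y y' s t) :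
    HasDerivWithinAt (fun τ => x τ ⬝ᵥ y τ) (x' ⬝ᵥ y t + x t ⬝ᵥ y') s t := by
  rw [hasDerivWithinAt_pi] at hx hy
  exact (HasDerivWithinAt.fun_sum fun i _ => (hx i).fun_mul (hy i)).congr_deriv
    Finset.sum_add_distrib

theorem HasDerivWithinAt.mulVec {κ : Type*} [Fintype κ] (A : Matrix κ ι ℝ) {x : ℝ → ι → ℝ}
    {x' : ι → ℝ} (hx : HasDerivWithinAt x x' s t) :
    HasDerivWithinAt (fun τ => A *ᵥ x τ) (A *ᵥ x') s t :=
  (Matrix.mulVecLin A).toContinuousLinearMap.hasFDerivAt.comp_hasDerivWithinAt t hx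

theorem HasDerivWithinAt.dotProduct_mulVec_self (A : Matrix ι ι ℝ) {x : ℝ → ι → ℝ}
    {x' : ι → ℝ} (hx : HasDerivWithinAt x x' s t) :
    HasDerivWithinAt (fun τ => x τ ⬝ᵥ A *ᵥ x τ) (x' ⬝ᵥ A *ᵥ x t + x t ⬝ᵥ A *ᵥ x') s t :=
  hx.dotProduct (hx.mulVec A)

theorem hasDerivAt_integral_dotProduct_mulVec_self_mul (P : Matrix ι ι ℝ) {w : ℝ → ℝ}
    (hw : Continuous w) {a b c d : ℝ} (hab : a ≤ b) (ht : t ∈ Ioo c d) {X Xt : ℝ → ℝ → ι → ℝ}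
    (hXt : ∀ z ∈ Icc a b, ∀ τ ∈ Icc c d,
      HasDerivWithinAt (fun σ => X z σ) (Xt z τ) (Icc c d) τ)
    (hX : ContinuousOn (fun p : ℝ × ℝ => X p.1 p.2) (Icc a b ×ˢ Icc c d))
    (hXt' : ContinuousOn (fun p : ℝ × ℝ => Xt p.1 p.2) (Icc a b ×ˢ Icc c d)) :
    HasDerivAt (fun τ => ∫ z in a..b, (X z τ ⬝ᵥ P *ᵥ X z τ) * w z)
      (∫ z in a..b, (Xt z t ⬝ᵥ P *ᵥ X z t + X z t ⬝ᵥ P *ᵥ Xt z t) * w z) t :=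
  hasDerivAt_intervalIntegral_of_continuousOn hab ht (by fun_prop) (by fun_prop)
    fun z hz τ hτ => (((hXt z hz τ (Ioo_subset_Icc_self hτ)).dotProduct_mulVec_self P).hasDerivAt
      (Icc_mem_nhds hτ.1 hτ.2)).mul_const (w z)

theorem integral_deriv_dotProduct_mulVec_self_mul_exp (A : Matrix ι ι ℝ) (μ : ℝ) {a b : ℝ}
    (hab : a ≤ b) {x x' : ℝ → ι → ℝ}
    (hx : ∀ z ∈ Icc a b, HasDerivWithinAt x (x' z) (Icc a b) z)
    (hx' : ContinuousOn x' (Icc a b)) :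
    ∫ z in a..b, (x' z ⬝ᵥ A *ᵥ x z + x z ⬝ᵥ A *ᵥ x' z) * exp (-μ * z) =
      exp (-μ * b) * (x b ⬝ᵥ A *ᵥ x b) - exp (-μ * a) * (x a ⬝ᵥ A *ᵥ x a)
        + μ * ∫ z in a..b, (x z ⬝ᵥ A *ᵥ x z) * exp (-μ * z) := by
  rw [← uIcc_of_le hab] at hx hx'
  have hxc : ContinuousOn x [[a, b]] := fun z hz => (hx z hz).continuousWithinAt
  have hexp (z : ℝ) : HasDerivAt (fun z => exp (-μ * z)) (-μ * exp (-μ * z)) z := by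
    simpa [mul_comm] using ((hasDerivAt_id z).const_mul (-μ)).exp
  have hparts := intervalIntegral.integral_mul_deriv_eq_deriv_mul_of_hasDerivWithinAt
    (fun z _ => (hexp z).hasDerivWithinAt)
    (fun z hz => (hx z hz).dotProduct_mulVec_self A)
    (Continuous.intervalIntegrable (by fun_prop) a b)
    (ContinuousOn.intervalIntegrable (by fun_prop))
  simp only [mul_assoc, intervalIntegral.integral_const_mul] at hparts
  simp only [mul_comm _ (exp _)]
  linarith

theorem iInf_mul_dotProduct_diagonal_mulVec_le [DecidableEq ι] {p : ι → ℝ} (hp : ∀ i, 0 ≤ p i)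
    (l x : ι → ℝ) :
    (⨅ i, l i) * (x ⬝ᵥ diagonal p *ᵥ x) ≤ x ⬝ᵥ (diagonal p * diagonal l) *ᵥ x := by
  simp only [diagonal_mul_diagonal, dotProduct, mulVec_diagonal, Finset.mul_sum]
  refine Finset.sum_le_sum fun i _ => ?_
  have := ciInf_le (Set.finite_range l).bddBelow i
  nlinarith [mul_nonneg (hp i) (mul_self_nonneg (x i))]

end Quadratic

section Transport

variable {ι : Type*} [Fintype ι] {Λ P : Matrix ι ι ℝ}

theorem neg_mulVec_dotProduct_add_of_transpose_mul_eq (hΛP : Λᵀ * P = P * Λ) (x y : ι → ℝ) :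
    -(Λ *ᵥ y) ⬝ᵥ P *ᵥ x + x ⬝ᵥ P *ᵥ -(Λ *ᵥ y) =
      -(y ⬝ᵥ (P * Λ) *ᵥ x + x ⬝ᵥ (P * Λ) *ᵥ y) := by
  have h : (Λ *ᵥ y) ⬝ᵥ P *ᵥ x = y ⬝ᵥ (P * Λ) *ᵥ x := by
    rw [← hΛP, ← mulVec_mulVec, dotProduct_transpose_mulVec, dotProduct_comm]
  rw [neg_dotProduct, mulVec_neg, dotProduct_neg, h, mulVec_mulVec]
  ring

theorem integral_energy_deriv_eq_of_transport (hΛP : Λᵀ * P = P * Λ) (μ : ℝ) {a b : ℝ}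
    (hab : a ≤ b) {x xz xt : ℝ → ι → ℝ}
    (hx : ∀ z ∈ Icc a b, HasDerivWithinAt x (xz z) (Icc a b) z)
    (hxz : ContinuousOn xz (Icc a b)) (hpde : ∀ z ∈ Icc a b, xt z + Λ *ᵥ xz z = 0) :
    ∫ z in a..b, (xt z ⬝ᵥ P *ᵥ x z + x z ⬝ᵥ P *ᵥ xt z) * exp (-μ * z) =
      -μ * (∫ z in a..b, (x z ⬝ᵥ (P * Λ) *ᵥ x z) * exp (-μ * z))
        - exp (-μ * b) * (x b ⬝ᵥ (P * Λ) *ᵥ x b) + exp (-μ * a) * (x a ⬝ᵥ (P * Λ) *ᵥ x a) := by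
  have hxt : ∀ z ∈ [[a, b]], (xt z ⬝ᵥ P *ᵥ x z + x z ⬝ᵥ P *ᵥ xt z) * exp (-μ * z) =
      -((xz z ⬝ᵥ (P * Λ) *ᵥ x z + x z ⬝ᵥ (P * Λ) *ᵥ xz z) * exp (-μ * z)) := by
    intro z hz
    rw [eq_neg_of_add_eq_zero_left (hpde z (uIcc_of_le hab ▸ hz)),
      neg_mulVec_dotProduct_add_of_transpose_mul_eq hΛP, neg_mul]
  rw [intervalIntegral.integral_congr hxt, intervalIntegral.integral_neg,
    integral_deriv_dotProduct_mulVec_self_mul_exp _ μ hab hx hxz]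
  ring

end Transport

theorem stmt_5_general (n : ℕ)
    (lvec pvec : Fin n → ℝ) (hp : ∀ i, 0 < pvec i)
    (Λ P : Matrix (Fin n) (Fin n) ℝ) (hΛ : Λ = Matrix.diagonal lvec)
    (hP : P = Matrix.diagonal pvec)
    (μ T : ℝ) (hμ : 0 < μ)
    (X Xz Xt : ℝ → ℝ → (Fin n → ℝ))
    (hXz : ∀ z ∈ Set.Icc (0:ℝ) 1, ∀ t ∈ Set.Icc (0:ℝ) T,
      HasDerivWithinAt (fun ζ => X ζ t) (Xz z t) (Set.Icc (0:ℝ) 1) z)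
    (hXt : ∀ z ∈ Set.Icc (0:ℝ) 1, ∀ t ∈ Set.Icc (0:ℝ) T,
      HasDerivWithinAt (fun τ => X z τ) (Xt z t) (Set.Icc (0:ℝ) T) t)
    (hXcont : ContinuousOn (fun p : ℝ × ℝ => X p.1 p.2) (Set.Icc 0 1 ×ˢ Set.Icc 0 T))
    (hXzcont : ContinuousOn (fun p : ℝ × ℝ => Xz p.1 p.2) (Set.Icc 0 1 ×ˢ Set.Icc 0 T))
    (hXtcont : ContinuousOn (fun p : ℝ × ℝ => Xt p.1 p.2) (Set.Icc 0 1 ×ˢ Set.Icc 0 T))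
    (hpde : ∀ z ∈ Set.Icc (0:ℝ) 1, ∀ t ∈ Set.Icc (0:ℝ) T,
      Xt z t + Λ.mulVec (Xz z t) = 0) :
    ∀ t ∈ Set.Ioo (0:ℝ) T, ∃ v : ℝ,
      HasDerivAt (fun τ => ∫ z in (0:ℝ)..1, (X z τ ⬝ᵥ P.mulVec (X z τ)) * Real.exp (-μ * z)) v t ∧
      v ≤ -μ * (⨅ i, lvec i) *
            (∫ z in (0:ℝ)..1, (X z t ⬝ᵥ P.mulVec (X z t)) * Real.exp (-μ * z)) -
          Real.exp (-μ) * (X 1 t ⬝ᵥ (P * Λ).mulVec (X 1 t)) +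
          X 0 t ⬝ᵥ (P * Λ).mulVec (X 0 t) := by
  intro t ht
  have ht' : t ∈ Icc 0 T := Ioo_subset_Icc_self ht
  have hXslice := hXcont.uncurry_right t ht'
  subst hΛ hP
  have hΛP : (diagonal lvec)ᵀ * diagonal pvec = diagonal pvec * diagonal lvec := by
    simp only [diagonal_transpose, diagonal_mul_diagonal, mul_comm]
  refine ⟨_, hasDerivAt_integral_dotProduct_mulVec_self_mul _ (by fun_prop) zero_le_one ht
    hXt hXcont hXtcont, ?_⟩
  rw [integral_energy_deriv_eq_of_transport hΛP μ zero_le_one (fun z hz => hXz z hz t ht')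
    (hXzcont.uncurry_right t ht') (fun z hz => hpde z hz t ht')]
  have hcoercive : (⨅ i, lvec i) *
        (∫ z in (0:ℝ)..1, (X z t ⬝ᵥ diagonal pvec *ᵥ X z t) * exp (-μ * z)) ≤
      ∫ z in (0:ℝ)..1, (X z t ⬝ᵥ (diagonal pvec * diagonal lvec) *ᵥ X z t) * exp (-μ * z) := by
    rw [← intervalIntegral.integral_const_mul]
    refine intervalIntegral.integral_mono_on zero_le_one
      (ContinuousOn.intervalIntegrable_of_Icc zero_le_one (by fun_prop))
      (ContinuousOn.intervalIntegrable_of_Icc zero_le_one (by fun_prop)) fun z _ => ?_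
    rw [← mul_assoc]
    exact mul_le_mul_of_nonneg_right
      (iInf_mul_dotProduct_diagonal_mulVec_le (fun i => (hp i).le) _ _) (exp_nonneg _)
  simp only [mul_zero, exp_zero, one_mul, mul_one]
  linarith [mul_le_mul_of_nonneg_left hcoercive hμ.le]

/-- dissipation estimate for `V₁` in Section 4.3 of the paper.
For a C¹ solution of the transport equation `∂ₜX + Λ ∂_z X = 0` on `[0,1] × [0,T]` and
diagonal positive `Λ`, `P`, the functional `V₁(t) = ∫₀¹ Xᵀ P X e^{-μ z} dz` is differentiable
on `(0,T)` with `V₁' ≤ -μ λ_min(Λ) V₁ - e^{-μ} X(1)ᵀ P Λ X(1) + X(0)ᵀ P Λ X(0)`. -/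
theorem stmt_5 (n : ℕ) (hn : 1 ≤ n)
    (lvec pvec : Fin n → ℝ) (hl : ∀ i, 0 < lvec i) (hp : ∀ i, 0 < pvec i)
    (Λ P : Matrix (Fin n) (Fin n) ℝ) (hΛ : Λ = Matrix.diagonal lvec)
    (hP : P = Matrix.diagonal pvec)
    (μ T : ℝ) (hμ : 0 < μ) (hT : 0 < T)
    (X Xz Xt : ℝ → ℝ → (Fin n → ℝ))
    (hXz : ∀ z ∈ Set.Icc (0:ℝ) 1, ∀ t ∈ Set.Icc (0:ℝ) T,
      HasDerivWithinAt (fun ζ => X ζ t) (Xz z t) (Set.Icc (0:ℝ) 1) z)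
    (hXt : ∀ z ∈ Set.Icc (0:ℝ) 1, ∀ t ∈ Set.Icc (0:ℝ) T,
      HasDerivWithinAt (fun τ => X z τ) (Xt z t) (Set.Icc (0:ℝ) T) t)
    (hXcont : ContinuousOn (fun p : ℝ × ℝ => X p.1 p.2) (Set.Icc 0 1 ×ˢ Set.Icc 0 T))
    (hXzcont : ContinuousOn (fun p : ℝ × ℝ => Xz p.1 p.2) (Set.Icc 0 1 ×ˢ Set.Icc 0 T))
    (hXtcont : ContinuousOn (fun p : ℝ × ℝ => Xt p.1 p.2) (Set.Icc 0 1 ×ˢ Set.Icc 0 T))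
    (hpde : ∀ z ∈ Set.Icc (0:ℝ) 1, ∀ t ∈ Set.Icc (0:ℝ) T,
      Xt z t + Λ.mulVec (Xz z t) = 0) :
    ∀ t ∈ Set.Ioo (0:ℝ) T, ∃ v : ℝ,
      HasDerivAt (fun τ => ∫ z in (0:ℝ)..1, (X z τ ⬝ᵥ P.mulVec (X z τ)) * Real.exp (-μ * z)) v t ∧
      v ≤ -μ * (⨅ i, lvec i) *
            (∫ z in (0:ℝ)..1, (X z t ⬝ᵥ P.mulVec (X z t)) * Real.exp (-μ * z)) -
          Real.exp (-μ) * (X 1 t ⬝ᵥ (P * Λ).mulVec (X 1 t)) +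
          X 0 t ⬝ᵥ (P * Λ).mulVec (X 0 t) :=
  stmt_5_general n lvec pvec hp Λ P hΛ hP μ T hμ X Xz Xt hXz hXt hXcont hXzcont hXtcont hpde
end

section
/- Let 0 ≤ a < b, ε > 0, t₀ ≥ 0, and let V : [t₀,∞) → ℝ be differentiable with V(t₀) ≤ b, and suppose V′(t) ≤ −ε for every t ≥ t₀ with a ≤ V(t) ≤ b. Then: (i) V(t) ≤ b for all t ≥ t₀; and (ii) if V(t₁) ≤ a for some t₁ ≥ t₀, then V(t) ≤ a for all t ≥ t₁. -/
open Set

/-- Claim 2 in the proof of Theorem 3 of the paper.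
If a differentiable `V : [t₀,∞) → ℝ` starts below `b` and satisfies `V' ≤ -ε` whenever
`a ≤ V ≤ b`, then `{V ≤ b}` is never left, and once `V ≤ a` it stays below `a`. -/
theorem stmt_7 (a b ε t₀ : ℝ) (ha : 0 ≤ a) (hab : a < b) (hε : 0 < ε) (ht₀ : 0 ≤ t₀)
    (V V' : ℝ → ℝ)
    (hV : ∀ t ≥ t₀, HasDerivWithinAt V (V' t) (Set.Ici t₀) t)
    (hV0 : V t₀ ≤ b)
    (hdec : ∀ t ≥ t₀, a ≤ V t → V t ≤ b → V' t ≤ -ε) :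
    (∀ t ≥ t₀, V t ≤ b) ∧ (∀ t₁ ≥ t₀, V t₁ ≤ a → ∀ t ≥ t₁, V t ≤ a) := by
  have key : ∀ c : ℝ, a ≤ c → c ≤ b → ∀ s ≥ t₀, V s ≤ c → ∀ t ≥ s, V t ≤ c := by
    intro c hac hcb s hs h0 t hts
    have hcont : ContinuousOn V (Icc s t) := by
      intro x hx
      have hxt : t₀ ≤ x := le_trans hs hx.1
      exact ((hV x hxt).continuousWithinAt).mono (fun y hy => le_trans hs hy.1)
    have := image_le_of_deriv_right_lt_deriv_boundary (f := V) (f' := V') (a := s) (b := t)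
      hcont
      (fun x hx => (hV x (le_trans hs hx.1)).mono (Ici_subset_Ici.2 (le_trans hs hx.1)))
      (B := fun _ => c) (B' := fun _ => 0) h0 (fun x => hasDerivAt_const x c)
      (fun x hx hxc => by
        have hx0 : t₀ ≤ x := le_trans hs hx.1
        have hxc' : V x = c := hxc
        have : V' x ≤ -ε := hdec x hx0 (hxc' ▸ hac) (hxc' ▸ hcb)
        show V' x < 0
        linarith)
    exact this ⟨hts, le_refl t⟩
  refine ⟨fun t ht => key b (le_of_lt hab) le_rfl t₀ le_rfl hV0 t ht,
    fun t₁ ht₁ h1 t ht => key a le_rfl (le_of_lt hab) t₁ ht₁ h1 t ht⟩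
end

section
/- Let n ≥ 1, let f : [0,∞) → [0,∞), let d : [0,∞) → ℝⁿ be bounded with |d(t)| → 0 as t → ∞, let γ : [0,∞) → [0,∞) be continuous with γ(0) = 0, and let c, a > 0 and K₁, K₂ ≥ 0 be constants. Suppose that for all 0 ≤ s ≤ t: f(t) ≤ c e^{−a(t−s)} (K₁ + K₂ (sup_{r∈[0,s]} |d(r)|)²) + γ(sup_{r∈[s,t]} |d(r)|). Then f(t) → 0 as t → ∞. -/
open Set Real Filter

/-- Section 4.6 of the paper: effect of vanishing disturbance.
A restartable disturbance-to-state estimate forces `f(t) → 0` whenever the bounded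
disturbance `d` vanishes at infinity. -/
theorem stmt_8 (n : ℕ) (hn : 1 ≤ n)
    (f : ℝ → ℝ) (hf : ∀ t ≥ (0:ℝ), 0 ≤ f t)
    (d : ℝ → EuclideanSpace ℝ (Fin n))
    (hdbdd : ∃ C, ∀ t ≥ (0:ℝ), ‖d t‖ ≤ C)
    (hdlim : Filter.Tendsto (fun t => ‖d t‖) Filter.atTop (nhds 0))
    (γ : ℝ → ℝ) (hγcont : ContinuousOn γ (Set.Ici 0)) (hγ0 : γ 0 = 0)
    (hγnonneg : ∀ s ≥ (0:ℝ), 0 ≤ γ s)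
    (c a K₁ K₂ : ℝ) (hc : 0 < c) (ha : 0 < a) (hK₁ : 0 ≤ K₁) (hK₂ : 0 ≤ K₂)
    (hest : ∀ s t : ℝ, 0 ≤ s → s ≤ t →
      f t ≤ c * Real.exp (-a * (t - s)) *
          (K₁ + K₂ * (sSup ((fun r => ‖d r‖) '' Set.Icc 0 s)) ^ 2) +
        γ (sSup ((fun r => ‖d r‖) '' Set.Icc s t))) :
    Filter.Tendsto f Filter.atTop (nhds 0) := by
  obtain ⟨C, hC⟩ := hdbdd
  set C' : ℝ := max C 0 with hC'def
  have hC'nonneg : 0 ≤ C' := le_max_right _ _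
  have hC' : ∀ t ≥ (0:ℝ), ‖d t‖ ≤ C' := fun t ht => (hC t ht).trans (le_max_left _ _)
  set M : ℝ := K₁ + K₂ * C' ^ 2 with hMdef
  have hM : 0 ≤ M := by positivity
  rw [Metric.tendsto_atTop]
  intro ε hε
  -- continuity of γ at 0 within Ici 0
  have hγ0' : ContinuousWithinAt γ (Set.Ici 0) 0 := hγcont 0 (self_mem_Ici)
  have hγball : ∀ᶠ x in nhdsWithin 0 (Set.Ici 0), dist (γ x) (γ 0) < ε / 2 :=
    hγ0'.tendsto (Metric.ball_mem_nhds _ (half_pos hε))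
  obtain ⟨δ, hδpos, hδ'⟩ := Metric.mem_nhdsWithin_iff.mp hγball
  have hδ : ∀ x : ℝ, dist x 0 < δ → x ∈ Set.Ici (0:ℝ) → dist (γ x) (γ 0) < ε / 2 :=
    fun x hx1 hx2 => hδ' ⟨Metric.mem_ball.mpr hx1, hx2⟩
  -- pick T so that disturbances are small
  rw [Metric.tendsto_atTop] at hdlim
  obtain ⟨T₀, hT₀⟩ := hdlim (δ / 2) (half_pos hδpos)
  set T : ℝ := max T₀ 0 with hTdef
  have hTnonneg : 0 ≤ T := le_max_right _ _
  -- pick L so that exponential term is small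
  have hexp : Filter.Tendsto (fun L : ℝ => c * Real.exp (-a * L) * M) Filter.atTop (nhds 0) := by
    have h1 : Filter.Tendsto (fun L : ℝ => a * L) Filter.atTop Filter.atTop :=
      Filter.Tendsto.const_mul_atTop ha tendsto_id
    have h2 : Filter.Tendsto (fun L : ℝ => Real.exp (-(a * L))) Filter.atTop (nhds 0) :=
      Real.tendsto_exp_neg_atTop_nhds_zero.comp h1
    have h3 := (h2.const_mul c).mul_const M
    simpa [neg_mul, mul_comm] using h3
  have hexp' : ∀ᶠ L in Filter.atTop, c * Real.exp (-a * L) * M < ε / 2 := by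
    have := hexp.eventually (gt_mem_nhds (half_pos hε))
    simpa using this
  obtain ⟨L₀, hL₀⟩ := Filter.eventually_atTop.mp hexp'
  set L : ℝ := max L₀ 0 with hLdef
  have hL : c * Real.exp (-a * L) * M < ε / 2 := hL₀ L (le_max_left _ _)
  refine ⟨T + L, fun t ht => ?_⟩
  have htT : T ≤ t := le_trans (le_add_of_nonneg_right (le_max_right _ _)) ht
  have ht0 : (0:ℝ) ≤ t := hTnonneg.trans htT
  -- bound the first sup
  have hS1bdd : ∀ x ∈ (fun r => ‖d r‖) '' Set.Icc 0 T, x ≤ C' := by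
    rintro x ⟨r, hr, rfl⟩
    exact hC' r hr.1
  have hS1ub : sSup ((fun r => ‖d r‖) '' Set.Icc 0 T) ≤ C' :=
    Real.sSup_le hS1bdd hC'nonneg
  have hS1lb : 0 ≤ sSup ((fun r => ‖d r‖) '' Set.Icc 0 T) := by
    refine le_csSup_of_le ⟨C', hS1bdd⟩ ⟨0, ⟨le_refl _, hTnonneg⟩, rfl⟩ (norm_nonneg _)
  -- bound the second sup
  have hS2bdd : ∀ x ∈ (fun r => ‖d r‖) '' Set.Icc T t, x ≤ δ / 2 := by
    rintro x ⟨r, hr, rfl⟩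
    have := hT₀ r (le_trans (le_max_left _ _) hr.1)
    rw [Real.dist_eq, sub_zero, abs_of_nonneg (norm_nonneg _)] at this
    exact this.le
  have hS2ub : sSup ((fun r => ‖d r‖) '' Set.Icc T t) ≤ δ / 2 :=
    Real.sSup_le hS2bdd (le_of_lt (half_pos hδpos))
  have hS2lb : 0 ≤ sSup ((fun r => ‖d r‖) '' Set.Icc T t) := by
    refine le_csSup_of_le ⟨δ / 2, hS2bdd⟩ ⟨T, ⟨le_refl _, htT⟩, rfl⟩ (norm_nonneg _)
  -- γ term small
  have hγsmall : γ (sSup ((fun r => ‖d r‖) '' Set.Icc T t)) < ε / 2 := by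
    have hx := hδ (x := sSup ((fun r => ‖d r‖) '' Set.Icc T t))
      (by rw [Real.dist_eq, sub_zero, abs_of_nonneg hS2lb]
          exact lt_of_le_of_lt hS2ub (half_lt_self hδpos)) hS2lb
    rw [hγ0, Real.dist_eq, sub_zero] at hx
    exact lt_of_le_of_lt (le_abs_self _) hx
  -- exponential term small
  have hexpsmall : c * Real.exp (-a * (t - T)) *
      (K₁ + K₂ * (sSup ((fun r => ‖d r‖) '' Set.Icc 0 T)) ^ 2) < ε / 2 := by
    refine lt_of_le_of_lt ?_ hL
    have h1 : Real.exp (-a * (t - T)) ≤ Real.exp (-a * L) := by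
      apply Real.exp_le_exp.mpr
      have : L ≤ t - T := by linarith
      nlinarith
    have h2 : K₁ + K₂ * (sSup ((fun r => ‖d r‖) '' Set.Icc 0 T)) ^ 2 ≤ M := by
      have := pow_le_pow_left₀ hS1lb hS1ub 2
      nlinarith
    have h3 : 0 ≤ K₁ + K₂ * (sSup ((fun r => ‖d r‖) '' Set.Icc 0 T)) ^ 2 := by positivity
    have := mul_le_mul (mul_le_mul_of_nonneg_left h1 hc.le) h2 h3
      (by positivity)
    exact this
  have hft := hest T t hTnonneg htT
  have : f t < ε := lt_of_le_of_lt hft (by linarith)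
  rw [Real.dist_eq, sub_zero, abs_of_nonneg (hf t ht0)]
  exact this
end

section
/- Let σ, χ, κ, Δ, M be strictly positive reals, let V : [0,∞) → [0,∞) be differentiable, and let w : [0,∞) → [0,∞) satisfy w(t)² ≤ κ V(t) for all t ≥ 0. Assume: (i) for every t ≥ 0, if w(t) ≤ M then V′(t) ≤ −σ V(t) + χ Δ²; (ii) V(0) ≤ M²/κ; and (iii) M²/Δ² > κχ/σ. Then: (a) w(t) ≤ M for all t ≥ 0; and (b) for every ε > 0 with (χ/σ) Δ² (1+ε) < M²/κ, there exists T ≥ 0 such that V(t) ≤ (χ/σ) Δ² (1+ε) for all t ≥ T. -/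
/-!
A sublevel set `{V ≤ c}` is forward invariant as soon as `V' < 0` on the level set `{V = c}`.
For `c = M²/κ` this holds: there `w² ≤ κ V = M²`, so the dissipation inequality applies and
gives `V' ≤ -σ M²/κ + χ Δ² < 0` by the rate condition. Hence `w ≤ M` for all times, the
dissipation inequality holds globally, and Grönwall bounds `V` by a function converging to
`χ Δ² / σ`.
-/

open Set Real Filter Topology

section RightDerivative

variable {f f' : ℝ → ℝ} {a : ℝ}

theorem continuousOn_Icc_of_hasDerivWithinAt_Ici
    (hf : ∀ t ≥ a, HasDerivWithinAt f (f' t) (Ici a) t) (b : ℝ) : ContinuousOn f (Icc a b) :=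
  fun x hx => (hf x hx.1).continuousWithinAt.mono Icc_subset_Ici_self

theorem le_of_deriv_neg_on_eq {c : ℝ} (hf : ∀ t ≥ a, HasDerivWithinAt f (f' t) (Ici a) t)
    (ha : f a ≤ c) (hc : ∀ t ≥ a, f t = c → f' t < 0) : ∀ t ≥ a, f t ≤ c := fun t ht =>
  image_le_of_deriv_right_lt_deriv_boundary (B := fun _ => c) (B' := 0)
    (continuousOn_Icc_of_hasDerivWithinAt_Ici hf t)
    (fun x hx => (hf x hx.1).mono (Ici_subset_Ici.2 hx.1)) ha
    (fun _ => hasDerivAt_const _ c) (fun _ hx => hc _ hx.1) ⟨ht, le_rfl⟩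

theorem le_gronwallBound_of_hasDerivWithinAt_Ici {δ K ε : ℝ}
    (hf : ∀ t ≥ a, HasDerivWithinAt f (f' t) (Ici a) t) (ha : f a ≤ δ)
    (bound : ∀ t ≥ a, f' t ≤ K * f t + ε) : ∀ t ≥ a, f t ≤ gronwallBound δ K ε (t - a) :=
  fun t ht =>
  le_gronwallBound_of_liminf_deriv_right_le (continuousOn_Icc_of_hasDerivWithinAt_Ici hf t)
    (fun x hx _ hr => ((hf x hx.1).mono (Ici_subset_Ici.2 hx.1)).liminf_right_slope_le hr)
    ha (fun _ hx => bound _ hx.1) t ⟨ht, le_rfl⟩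

end RightDerivative

theorem tendsto_gronwallBound_atTop {δ K ε : ℝ} (hK : K < 0) :
    Tendsto (gronwallBound δ K ε) atTop (𝓝 (-ε / K)) := by
  have hexp : Tendsto (fun x => exp (K * x)) atTop (𝓝 0) :=
    tendsto_exp_atBot.comp (tendsto_id.const_mul_atTop_of_neg hK)
  rw [gronwallBound_of_K_ne_0 hK.ne]
  convert (hexp.const_mul δ).add ((hexp.sub_const 1).const_mul (ε / K)) using 2
  ring

theorem exists_ge_forall_ge_of_eventually_atTop {α : Type*} [LinearOrder α] [Nonempty α]
    {p : α → Prop} (h : ∀ᶠ t in atTop, p t) (a : α) : ∃ T ≥ a, ∀ t ≥ T, p t := by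
  obtain ⟨T, hT⟩ := h.exists_forall_of_atTop
  exact ⟨max T a, le_max_right T a, fun t ht => hT t (le_of_max_le_left ht)⟩

theorem stmt_11_general (σ χ κ Δ M : ℝ) (hσ : 0 < σ) (hχ : 0 < χ) (hκ : 0 < κ) (hΔ : 0 < Δ)
    (hM : 0 < M)
    (V V' : ℝ → ℝ)
    (hV : ∀ t ≥ (0:ℝ), HasDerivWithinAt V (V' t) (Set.Ici (0:ℝ)) t)
    (w : ℝ → ℝ)
    (hwV : ∀ t ≥ (0:ℝ), w t ^ 2 ≤ κ * V t)
    (hdiss : ∀ t ≥ (0:ℝ), w t ≤ M → V' t ≤ -σ * V t + χ * Δ ^ 2)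
    (hV0 : V 0 ≤ M ^ 2 / κ)
    (hrate : M ^ 2 / Δ ^ 2 > κ * χ / σ) :
    (∀ t ≥ (0:ℝ), w t ≤ M) ∧
    ∀ ε > (0:ℝ), (χ / σ) * Δ ^ 2 * (1 + ε) < M ^ 2 / κ →
      ∃ T ≥ (0:ℝ), ∀ t ≥ T, V t ≤ (χ / σ) * Δ ^ 2 * (1 + ε) := by
  have hlevel : χ * Δ ^ 2 < σ * (M ^ 2 / κ) := by
    rw [gt_iff_lt, div_lt_div_iff₀ hσ (by positivity)] at hrate
    rw [mul_div_assoc', lt_div_iff₀ hκ]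
    linarith
  have hw : ∀ t ≥ (0:ℝ), V t ≤ M ^ 2 / κ → w t ≤ M := fun t ht hVt =>
    (abs_le_of_sq_le_sq' ((hwV t ht).trans ((le_div_iff₀' hκ).1 hVt)) hM.le).2
  have hVM : ∀ t ≥ (0:ℝ), V t ≤ M ^ 2 / κ := le_of_deriv_neg_on_eq hV hV0 fun t ht hVt => by
    have := hdiss t ht (hw t ht hVt.le)
    rw [hVt] at this
    linarith
  have hwM : ∀ t ≥ (0:ℝ), w t ≤ M := fun t ht => hw t ht (hVM t ht)
  refine ⟨hwM, fun ε hε _ => ?_⟩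
  have hgronwall := le_gronwallBound_of_hasDerivWithinAt_Ici hV le_rfl
    fun t ht => hdiss t ht (hwM t ht)
  have hlim : Tendsto (gronwallBound (V 0) (-σ) (χ * Δ ^ 2)) atTop (𝓝 ((χ / σ) * Δ ^ 2)) := by
    convert tendsto_gronwallBound_atTop (δ := V 0) (ε := χ * Δ ^ 2) (neg_lt_zero.2 hσ) using 2
    field_simp
  have hlt : (χ / σ) * Δ ^ 2 < (χ / σ) * Δ ^ 2 * (1 + ε) :=
    lt_mul_of_one_lt_right (by positivity) (by linarith)
  obtain ⟨T, hT0, hT⟩ :=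
    exists_ge_forall_ge_of_eventually_atTop (hlim.eventually (eventually_lt_nhds hlt)) 0
  refine ⟨T, hT0, fun t ht => ?_⟩
  have := hgronwall t (hT0.trans ht)
  rw [sub_zero] at this
  exact this.trans (hT t ht).le

/-- Lyapunov-theoretic core of Theorem 3 of the paper: practical stability
under quantized control.  If `w² ≤ κ V`, the dissipation inequality `V' ≤ -σ V + χ Δ²` holds
whenever `w ≤ M`, `V 0 ≤ M²/κ`, and the data rate condition `M²/Δ² > κχ/σ` holds, then the
output stays within the range of the quantizer (`w ≤ M` for all times) and `V` is ultimately
bounded by `(χ/σ) Δ² (1+ε)`. -/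
theorem stmt_11 (σ χ κ Δ M : ℝ) (hσ : 0 < σ) (hχ : 0 < χ) (hκ : 0 < κ) (hΔ : 0 < Δ)
    (hM : 0 < M)
    (V V' : ℝ → ℝ) (hVnonneg : ∀ t ≥ (0:ℝ), 0 ≤ V t)
    (hV : ∀ t ≥ (0:ℝ), HasDerivWithinAt V (V' t) (Set.Ici (0:ℝ)) t)
    (w : ℝ → ℝ) (hwnonneg : ∀ t ≥ (0:ℝ), 0 ≤ w t)
    (hwV : ∀ t ≥ (0:ℝ), w t ^ 2 ≤ κ * V t)
    (hdiss : ∀ t ≥ (0:ℝ), w t ≤ M → V' t ≤ -σ * V t + χ * Δ ^ 2)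
    (hV0 : V 0 ≤ M ^ 2 / κ)
    (hrate : M ^ 2 / Δ ^ 2 > κ * χ / σ) :
    (∀ t ≥ (0:ℝ), w t ≤ M) ∧
    ∀ ε > (0:ℝ), (χ / σ) * Δ ^ 2 * (1 + ε) < M ^ 2 / κ →
      ∃ T ≥ (0:ℝ), ∀ t ≥ T, V t ≤ (χ / σ) * Δ ^ 2 * (1 + ε) :=
  stmt_11_general σ χ κ Δ M hσ hχ hκ hΔ hM V V' hV w hwV hdiss hV0 hrate
end

section
/- Let n, m ≥ 1. Let Λ = diag(λ₁,…,λₙ) be an n×n real diagonal matrix with strictly positive diagonal entries, let H and R be n×n real matrices, B an n×m real matrix, K an m×n real matrix, and let μ > 0 satisfy 2 e^{−μ} λ_max(Λ) ‖H‖₂² ≤ λ_min(Λ), where λ_max(Λ) and λ_min(Λ) are the largest and smallest diagonal entries of Λ. Then there exists a constant C > 0 such that for every continuously differentiable φ : [0,1] → ℝⁿ and every η ∈ ℝⁿ with φ(0) = H φ(1) + BK η, one has: −∫₀¹ φ′(z)ᵀ Λ φ(z) e^{μ(z−1)} dz + ηᵀ R η ≤ C · (∫₀¹ |φ(z)|²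 e^{μ(z−1)} dz + |η|²). -/
open Matrix Set Real

/-- The operator norm of a real matrix, induced by the Euclidean norms. -/
noncomputable def euclOpNorm {m n : ℕ} (A : Matrix (Fin m) (Fin n) ℝ) : ℝ :=
  ‖LinearMap.toContinuousLinearMap (Matrix.toEuclideanLin A)‖

/-! With `q = φᵀΛφ` and the weight `e(z) = e^{μ(z-1)}`, integration by parts gives
`-2 ∫ φ'ᵀΛφ e = e^{-μ} q(0) - q(1) + μ ∫ q e`. The last term is at most `μ λ_max ∫ |φ|² e`.
At the inflow boundary, `|φ(0)|² ≤ 2‖H‖²|φ(1)|² + 2‖BK‖²|η|²`, and the condition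
`2 e^{-μ} λ_max ‖H‖² ≤ λ_min` lets `q(1) ≥ λ_min |φ(1)|²` absorb the reflected part, leaving
`e^{-μ} q(0) - q(1) ≤ 2 e^{-μ} λ_max ‖BK‖² |η|²`. -/

open scoped RealInnerProductSpace

section OperatorNorm

variable {m n : ℕ}

lemma euclOpNorm_nonneg (A : Matrix (Fin m) (Fin n) ℝ) : 0 ≤ euclOpNorm A :=
  norm_nonneg _

lemma norm_toLp_mulVec_le (A : Matrix (Fin m) (Fin n) ℝ) (x : EuclideanSpace ℝ (Fin n)) :
    ‖WithLp.toLp 2 (A *ᵥ x)‖ ≤ euclOpNorm A * ‖x‖ :=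
  (LinearMap.toContinuousLinearMap (Matrix.toEuclideanLin A)).le_opNorm x

lemma dotProduct_mulVec_le_euclOpNorm_mul (A : Matrix (Fin n) (Fin n) ℝ)
    (x : EuclideanSpace ℝ (Fin n)) : x ⬝ᵥ A *ᵥ x ≤ euclOpNorm A * ‖x‖ ^ 2 :=
  calc x ⬝ᵥ A *ᵥ x = ⟪x, WithLp.toLp 2 (A *ᵥ x)⟫ := (inner_toEuclideanCLM A x x).symm
    _ ≤ ‖x‖ * (euclOpNorm A * ‖x‖) :=
      (real_inner_le_norm _ _).trans (by gcongr; exact norm_toLp_mulVec_le A x)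
    _ = euclOpNorm A * ‖x‖ ^ 2 := by ring

lemma norm_sq_le_of_ofLp_eq_mulVec_add_mulVec {k : ℕ} {x : EuclideanSpace ℝ (Fin n)}
    {y : EuclideanSpace ℝ (Fin m)} {w : EuclideanSpace ℝ (Fin k)}
    (A : Matrix (Fin n) (Fin m) ℝ) (G : Matrix (Fin n) (Fin k) ℝ)
    (h : x.ofLp = A *ᵥ y + G *ᵥ w) :
    ‖x‖ ^ 2 ≤ 2 * (euclOpNorm A ^ 2 * ‖y‖ ^ 2 + euclOpNorm G ^ 2 * ‖w‖ ^ 2) := by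
  have hx : x = WithLp.toLp 2 (A *ᵥ y) + WithLp.toLp 2 (G *ᵥ w) := by
    ext i; simp [h]
  calc ‖x‖ ^ 2 ≤ (euclOpNorm A * ‖y‖ + euclOpNorm G * ‖w‖) ^ 2 := by
        rw [hx]
        gcongr
        exact (norm_add_le _ _).trans
          (add_le_add (norm_toLp_mulVec_le A y) (norm_toLp_mulVec_le G w))
    _ ≤ 2 * (euclOpNorm A ^ 2 * ‖y‖ ^ 2 + euclOpNorm G ^ 2 * ‖w‖ ^ 2) := by
        simpa only [mul_pow] using add_sq_le (a := euclOpNorm A * ‖y‖) (b := euclOpNorm G * ‖w‖)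

end OperatorNorm

section QuadraticForm

variable {ι : Type*} [Fintype ι] [DecidableEq ι] {S : Matrix ι ι ℝ}
  {φ φ' : ℝ → EuclideanSpace ℝ ι}

lemma hasDerivWithinAt_dotProduct_mulVec (hS : S.IsSymm) {s : Set ℝ} {z : ℝ}
    {v : EuclideanSpace ℝ ι} (hφ : HasDerivWithinAt φ v s z) :
    HasDerivWithinAt (fun t ↦ φ t ⬝ᵥ S *ᵥ φ t) (2 * (v ⬝ᵥ S *ᵥ φ z)) s z := by
  have hSφ := (toEuclideanCLM (𝕜 := ℝ) S).hasFDerivAt.comp_hasDerivWithinAt z hφ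
  have h := hφ.inner ℝ hSφ
  simp only [Function.comp_apply, inner_toEuclideanCLM] at h
  refine h.congr_deriv ?_
  rw [dotProduct_mulVec, ← mulVec_transpose, hS.eq, dotProduct_comm]
  ring

lemma continuousOn_dotProduct_mulVec {s : Set ℝ} {ψ : ℝ → EuclideanSpace ℝ ι}
    (hφ : ContinuousOn φ s) (hψ : ContinuousOn ψ s) :
    ContinuousOn (fun t ↦ ψ t ⬝ᵥ S *ᵥ φ t) s := by
  simp_rw [← inner_toEuclideanCLM]
  exact hψ.inner ((toEuclideanCLM (𝕜 := ℝ) S).continuous.comp_continuousOn hφ)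

lemma two_mul_integral_dotProduct_mulVec_mul_exp (hS : S.IsSymm) (μ : ℝ)
    (hφ : ∀ z ∈ Icc (0 : ℝ) 1, HasDerivWithinAt φ (φ' z) (Icc 0 1) z)
    (hφ' : ContinuousOn φ' (Icc 0 1)) :
    2 * ∫ z in (0 : ℝ)..1, (φ' z ⬝ᵥ S *ᵥ φ z) * exp (μ * (z - 1)) =
      φ 1 ⬝ᵥ S *ᵥ φ 1 - exp (-μ) * (φ 0 ⬝ᵥ S *ᵥ φ 0) -
        μ * ∫ z in (0 : ℝ)..1, (φ z ⬝ᵥ S *ᵥ φ z) * exp (μ * (z - 1)) := by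
  have hIcc : uIcc (0 : ℝ) 1 = Icc 0 1 := uIcc_of_le zero_le_one
  have hφc : ContinuousOn φ (Icc 0 1) := fun z hz ↦ (hφ z hz).continuousWithinAt
  have hexp : ∀ z, HasDerivAt (fun z ↦ exp (μ * (z - 1))) (μ * exp (μ * (z - 1))) z := fun z ↦ by
    simpa [mul_comm μ] using (((hasDerivAt_id z).sub_const 1).const_mul μ).exp
  have hibp := intervalIntegral.integral_mul_deriv_eq_deriv_mul_of_hasDerivWithinAt
    (u' := fun z ↦ 2 * (φ' z ⬝ᵥ S *ᵥ φ z))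
    (by rw [hIcc]; exact fun z hz ↦ hasDerivWithinAt_dotProduct_mulVec hS (hφ z hz))
    (fun z _ ↦ (hexp z).hasDerivWithinAt)
    (by
      refine ContinuousOn.intervalIntegrable ?_
      rw [hIcc]
      exact continuousOn_const.mul (continuousOn_dotProduct_mulVec hφc hφ'))
    (Continuous.intervalIntegrable (by fun_prop) _ _)
  simp only [mul_assoc, mul_left_comm _ μ, intervalIntegral.integral_const_mul, sub_self,
    mul_zero, exp_zero, mul_one, zero_sub, mul_neg_one] at hibp
  linarith

end QuadraticForm

section DiagonalQuadraticForm

variable {ι : Type*} [Fintype ι] [DecidableEq ι] {d : ι → ℝ} {c : ℝ}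

lemma dotProduct_diagonal_mulVec_eq (x : EuclideanSpace ℝ ι) :
    x ⬝ᵥ diagonal d *ᵥ x = ∑ i, d i * x i ^ 2 := by
  simp only [dotProduct, mulVec_diagonal]
  exact Finset.sum_congr rfl fun i _ ↦ by ring

lemma dotProduct_diagonal_mulVec_le (h : ∀ i, d i ≤ c) (x : EuclideanSpace ℝ ι) :
    x ⬝ᵥ diagonal d *ᵥ x ≤ c * ‖x‖ ^ 2 := by
  rw [dotProduct_diagonal_mulVec_eq, EuclideanSpace.norm_sq_eq, Finset.mul_sum]
  refine Finset.sum_le_sum fun i _ ↦ ?_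
  rw [Real.norm_eq_abs, sq_abs]
  exact mul_le_mul_of_nonneg_right (h i) (sq_nonneg _)

lemma le_dotProduct_diagonal_mulVec (h : ∀ i, c ≤ d i) (x : EuclideanSpace ℝ ι) :
    c * ‖x‖ ^ 2 ≤ x ⬝ᵥ diagonal d *ᵥ x := by
  rw [dotProduct_diagonal_mulVec_eq, EuclideanSpace.norm_sq_eq, Finset.mul_sum]
  refine Finset.sum_le_sum fun i _ ↦ ?_
  rw [Real.norm_eq_abs, sq_abs]
  exact mul_le_mul_of_nonneg_right (h i) (sq_nonneg _)

lemma integral_dotProduct_diagonal_mulVec_mul_le {a b : ℝ} (hab : a ≤ b) (h : ∀ i, d i ≤ c)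
    {φ : ℝ → EuclideanSpace ℝ ι} {w : ℝ → ℝ} (hφ : ContinuousOn φ (Icc a b))
    (hw : ContinuousOn w (Icc a b))
    (hw₀ : ∀ z ∈ Icc a b, 0 ≤ w z) :
    ∫ z in a..b, (φ z ⬝ᵥ diagonal d *ᵥ φ z) * w z ≤ c * ∫ z in a..b, ‖φ z‖ ^ 2 * w z := by
  rw [← intervalIntegral.integral_const_mul]
  refine intervalIntegral.integral_mono_on hab ?_ ?_ fun z hz ↦ ?_
  · refine ContinuousOn.intervalIntegrable ?_
    rw [uIcc_of_le hab]
    exact (continuousOn_dotProduct_mulVec hφ hφ).mul hw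
  · refine ContinuousOn.intervalIntegrable ?_
    rw [uIcc_of_le hab]
    exact continuousOn_const.mul ((hφ.norm.pow 2).mul hw)
  · rw [← mul_assoc]
    exact mul_le_mul_of_nonneg_right (dotProduct_diagonal_mulVec_le h _) (hw₀ z hz)

end DiagonalQuadraticForm

lemma mul_dotProduct_diagonal_mulVec_le_of_ofLp_eq {n k : ℕ} {d : Fin n → ℝ} (hd : ∀ i, 0 ≤ d i)
    {H : Matrix (Fin n) (Fin n) ℝ} {G : Matrix (Fin n) (Fin k) ℝ} {ε : ℝ} (hε : 0 ≤ ε)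
    (hcond : 2 * ε * (⨆ i, d i) * euclOpNorm H ^ 2 ≤ ⨅ i, d i)
    {x y : EuclideanSpace ℝ (Fin n)} {w : EuclideanSpace ℝ (Fin k)}
    (hx : x.ofLp = H *ᵥ y + G *ᵥ w) :
    ε * (x ⬝ᵥ diagonal d *ᵥ x) ≤
      y ⬝ᵥ diagonal d *ᵥ y + 2 * (ε * (⨆ i, d i) * euclOpNorm G ^ 2) * ‖w‖ ^ 2 := by
  have hL : 0 ≤ ⨆ i, d i := Real.iSup_nonneg hd
  calc ε * (x ⬝ᵥ diagonal d *ᵥ x) ≤ ε * ((⨆ i, d i) * ‖x‖ ^ 2) := by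
        gcongr; exact dotProduct_diagonal_mulVec_le (le_ciSup (Finite.bddAbove_range d)) x
    _ ≤ ε * ((⨆ i, d i) * (2 * (euclOpNorm H ^ 2 * ‖y‖ ^ 2 + euclOpNorm G ^ 2 * ‖w‖ ^ 2))) := by
        gcongr; exact norm_sq_le_of_ofLp_eq_mulVec_add_mulVec H G hx
    _ = 2 * ε * (⨆ i, d i) * euclOpNorm H ^ 2 * ‖y‖ ^ 2 +
          2 * (ε * (⨆ i, d i) * euclOpNorm G ^ 2) * ‖w‖ ^ 2 := by ring
    _ ≤ (⨅ i, d i) * ‖y‖ ^ 2 + 2 * (ε * (⨆ i, d i) * euclOpNorm G ^ 2) * ‖w‖ ^ 2 := by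
        gcongr
    _ ≤ y ⬝ᵥ diagonal d *ᵥ y + 2 * (ε * (⨆ i, d i) * euclOpNorm G ^ 2) * ‖w‖ ^ 2 := by
        gcongr; exact le_dotProduct_diagonal_mulVec (ciInf_le (Finite.bddBelow_range d)) y

theorem stmt_12_general (n m : ℕ)
    (lvec : Fin n → ℝ) (hl : ∀ i, 0 < lvec i)
    (Λ : Matrix (Fin n) (Fin n) ℝ) (hΛ : Λ = Matrix.diagonal lvec)
    (H R : Matrix (Fin n) (Fin n) ℝ) (B : Matrix (Fin n) (Fin m) ℝ)
    (K : Matrix (Fin m) (Fin n) ℝ)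
    (μ : ℝ) (hμ : 0 < μ)
    (hμcond : 2 * Real.exp (-μ) * (⨆ i, lvec i) * euclOpNorm H ^ 2 ≤ ⨅ i, lvec i) :
    ∃ C > (0:ℝ), ∀ (φ φ' : ℝ → EuclideanSpace ℝ (Fin n)) (η : EuclideanSpace ℝ (Fin n)),
      (∀ z ∈ Set.Icc (0:ℝ) 1, HasDerivWithinAt φ (φ' z) (Set.Icc (0:ℝ) 1) z) →
      ContinuousOn φ' (Set.Icc (0:ℝ) 1) →
      φ 0 = H.mulVec (φ 1) + (B * K).mulVec η →
      -(∫ z in (0:ℝ)..1, (φ' z ⬝ᵥ Λ.mulVec (φ z)) * Real.exp (μ * (z - 1))) +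
          η ⬝ᵥ R.mulVec η ≤
        C * ((∫ z in (0:ℝ)..1, ‖φ z‖ ^ 2 * Real.exp (μ * (z - 1))) + ‖η‖ ^ 2) := by
  subst hΛ
  have hL : 0 ≤ ⨆ i, lvec i := Real.iSup_nonneg fun i ↦ (hl i).le
  have hR₀ := euclOpNorm_nonneg R
  refine ⟨μ * (⨆ i, lvec i) / 2 + exp (-μ) * (⨆ i, lvec i) * euclOpNorm (B * K) ^ 2 +
    euclOpNorm R + 1, by positivity, fun φ φ' η hφ hφ' hbc ↦ ?_⟩
  have hφc : ContinuousOn φ (Icc 0 1) := fun z hz ↦ (hφ z hz).continuousWithinAt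
  have henergy := two_mul_integral_dotProduct_mulVec_mul_exp (isSymm_diagonal lvec) μ hφ hφ'
  have hweighted := integral_dotProduct_diagonal_mulVec_mul_le (d := lvec) (c := ⨆ i, lvec i)
    (w := fun z ↦ exp (μ * (z - 1))) zero_le_one (le_ciSup (Finite.bddAbove_range lvec)) hφc
    (by fun_prop) fun z _ ↦ (exp_pos _).le
  have hboundary := mul_dotProduct_diagonal_mulVec_le_of_ofLp_eq (fun i ↦ (hl i).le)
    (exp_pos (-μ)).le hμcond hbc
  have hR := dotProduct_mulVec_le_euclOpNorm_mul R η
  have hI₀ : 0 ≤ ∫ z in (0 : ℝ)..1, ‖φ z‖ ^ 2 * exp (μ * (z - 1)) :=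
    intervalIntegral.integral_nonneg zero_le_one fun z _ ↦ by positivity
  have hBK : 0 ≤ exp (-μ) * (⨆ i, lvec i) * euclOpNorm (B * K) ^ 2 := by positivity
  linarith [mul_le_mul_of_nonneg_left hweighted hμ.le, mul_nonneg hBK hI₀, mul_nonneg hR₀ hI₀,
    mul_nonneg (mul_nonneg hμ.le hL) (sq_nonneg ‖η‖), sq_nonneg ‖η‖]

/-- (Step 1 of the proof of Lemma 1 of the paper: quasi-dissipativity of the
closed-loop generator `A(φ,η) = (-Λ φ_z, R η)` with respect to the weighted inner product
`⟨(φ,η),(ψ,θ)⟩_μ = ∫₀¹ φᵀψ e^{μ(z-1)} dz + θᵀη`, for `μ` large enough). -/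
theorem stmt_12 (n m : ℕ) (hn : 1 ≤ n) (hm : 1 ≤ m)
    (lvec : Fin n → ℝ) (hl : ∀ i, 0 < lvec i)
    (Λ : Matrix (Fin n) (Fin n) ℝ) (hΛ : Λ = Matrix.diagonal lvec)
    (H R : Matrix (Fin n) (Fin n) ℝ) (B : Matrix (Fin n) (Fin m) ℝ)
    (K : Matrix (Fin m) (Fin n) ℝ)
    (μ : ℝ) (hμ : 0 < μ)
    (hμcond : 2 * Real.exp (-μ) * (⨆ i, lvec i) * euclOpNorm H ^ 2 ≤ ⨅ i, lvec i) :
    ∃ C > (0:ℝ), ∀ (φ φ' : ℝ → EuclideanSpace ℝ (Fin n)) (η : EuclideanSpace ℝ (Fin n)),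
      (∀ z ∈ Set.Icc (0:ℝ) 1, HasDerivWithinAt φ (φ' z) (Set.Icc (0:ℝ) 1) z) →
      ContinuousOn φ' (Set.Icc (0:ℝ) 1) →
      φ 0 = H.mulVec (φ 1) + (B * K).mulVec η →
      -(∫ z in (0:ℝ)..1, (φ' z ⬝ᵥ Λ.mulVec (φ z)) * Real.exp (μ * (z - 1))) +
          η ⬝ᵥ R.mulVec η ≤
        C * ((∫ z in (0:ℝ)..1, ‖φ z‖ ^ 2 * Real.exp (μ * (z - 1))) + ‖η‖ ^ 2) :=
  stmt_12_general n m lvec hl Λ hΛ H R B K μ hμ hμcond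
end
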